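/- arXiv:2201.08921 — 6 statements merged into one kernel-verified Lean document; each statement's English description precedes it below -/
import Mathlib

section
/- Let X be a path-connected, locally compact length metric space and Y a metric space, and let ω : [0,∞) → [0,∞) be continuous increasing with ω(0) = 0. If a family F of maps X → Y is locally uniformly ω-continuous, then F is uniformly ω-continuous on every compact set E ⊆ X: there exists L > 0 such that d_Y(f(x), f(y)) ≤ L·ω(d_X(x,y)) for all x, y ∈ E and all f ∈ F. -/
open Metric Set

/-- On a path-connected, locally compact length metric space, a
locally uniformly `ω`-continuous family of maps into a metric space is
uniformly `ω`-continuous on every compact set. The length-space property is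
expressed via approximating chains. -/
theorem stmt_1 {X Y : Type*} [MetricSpace X] [MetricSpace Y]
    [PathConnectedSpace X] [LocallyCompactSpace X]
    (hlength : ∀ x y : X, ∀ δ > (0 : ℝ), ∃ (m : ℕ) (z : ℕ → X),
      z 0 = x ∧ z m = y ∧ (∀ i < m, dist (z i) (z (i + 1)) < δ) ∧
      (∑ i ∈ Finset.range m, dist (z i) (z (i + 1))) ≤ dist x y + δ)
    (ω : ℝ → ℝ) (hωc : Continuous ω) (hωm : StrictMono ω) (hω0 : ω 0 = 0)
    (F : Set (X → Y))
    (hloc : ∀ x₀ : X, ∃ r > (0 : ℝ), ∃ L > (0 : ℝ),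
      ∀ f ∈ F, ∀ x ∈ ball x₀ r, ∀ y ∈ ball x₀ r,
        dist (f x) (f y) ≤ L * ω (dist x y)) :
    ∀ E : Set X, IsCompact E → ∃ L > (0 : ℝ),
      ∀ f ∈ F, ∀ x ∈ E, ∀ y ∈ E, dist (f x) (f y) ≤ L * ω (dist x y) := by
  intro E hE
  have hωnn : ∀ t : ℝ, 0 ≤ t → 0 ≤ ω t := fun t ht => hω0 ▸ hωm.monotone ht
  rcases E.eq_empty_or_nonempty with rfl | ⟨x₀, hx₀⟩
  · exact ⟨1, one_pos, by simp⟩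
  -- choose local data
  choose r hr L hL hball using hloc
  -- Step 1: uniform boundedness against f x₀, for arbitrary points
  have hbdd : ∀ y : X, ∃ M : ℝ, 0 ≤ M ∧ ∀ f ∈ F, dist (f x₀) (f y) ≤ M := by
    set S : Set X := {y | ∃ M : ℝ, ∀ f ∈ F, dist (f x₀) (f y) ≤ M} with hS
    have hop : IsOpen S := by
      rw [isOpen_iff]
      rintro y ⟨M, hM⟩
      refine ⟨r y, hr y, fun y' hy' => ⟨M + L y * ω (r y), fun f hf => ?_⟩⟩
      have h1 : dist (f y) (f y') ≤ L y * ω (dist y y') :=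
        hball y f hf y (mem_ball_self (hr y)) y' hy'
      have h2 : ω (dist y y') ≤ ω (r y) := hωm.monotone (mem_ball'.mp hy').le
      calc dist (f x₀) (f y') ≤ dist (f x₀) (f y) + dist (f y) (f y') :=
            dist_triangle _ _ _
        _ ≤ M + L y * ω (r y) :=
            add_le_add (hM f hf)
              (h1.trans (mul_le_mul_of_nonneg_left h2 (hL y).le))
    have hcl : IsClosed S := by
      refine isClosed_of_closure_subset fun y hy => ?_
      obtain ⟨y', hy'b, M, hM⟩ :=
        (_root_.mem_closure_iff.mp hy) (ball y (r y)) isOpen_ball (mem_ball_self (hr y))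
      refine ⟨M + L y * ω (r y), fun f hf => ?_⟩
      have h1 : dist (f y') (f y) ≤ L y * ω (dist y' y) :=
        hball y f hf y' hy'b y (mem_ball_self (hr y))
      have h2 : ω (dist y' y) ≤ ω (r y) := hωm.monotone (mem_ball.mp hy'b).le
      calc dist (f x₀) (f y) ≤ dist (f x₀) (f y') + dist (f y') (f y) :=
            dist_triangle _ _ _
        _ ≤ M + L y * ω (r y) :=
            add_le_add (hM f hf)
              (h1.trans (mul_le_mul_of_nonneg_left h2 (hL y).le))
    have hSuniv : S = univ :=
      IsClopen.eq_univ (s := S) ⟨hcl, hop⟩ ⟨x₀, 0, fun f hf => by simp⟩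
    intro y
    have hy : y ∈ S := hSuniv ▸ mem_univ y
    obtain ⟨M, hM⟩ := hy
    exact ⟨max M 0, le_max_right _ _, fun f hf => (hM f hf).trans (le_max_left _ _)⟩
  choose M hM0 hM using hbdd
  -- Step 2: finite subcover of E by half-radius balls
  obtain ⟨t, htE, htcov⟩ := hE.elim_nhds_subcover (fun y => ball y (r y / 2))
    (fun y _ => ball_mem_nhds y (by linarith [hr y]))
  have htne : t.Nonempty := by
    obtain ⟨y, hy⟩ := mem_iUnion₂.mp (htcov hx₀)
    exact ⟨y, hy.1⟩
  set ρ : ℝ := t.inf' htne (fun y => r y / 2) with hρdef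
  have hρpos : 0 < ρ := by
    rw [hρdef]
    apply Finset.lt_inf'_iff _ |>.mpr
    intro y _; linarith [hr y]
  have hωρ : 0 < ω ρ := hω0 ▸ hωm hρpos
  set L₀ : ℝ := ∑ y ∈ t, L y with hL₀def
  have hL₀le : ∀ y ∈ t, L y ≤ L₀ :=
    fun y hy => Finset.single_le_sum (fun z _ => (hL z).le) hy
  have hL₀pos : 0 < L₀ := by
    obtain ⟨y, hy⟩ := htne
    exact lt_of_lt_of_le (hL y) (hL₀le y hy)
  set Mb : ℝ := ∑ y ∈ t, (M y + L y * ω (r y)) with hMbdef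
  have hMbnn : 0 ≤ Mb :=
    Finset.sum_nonneg fun y _ =>
      add_nonneg (hM0 y) (mul_nonneg (hL y).le (hωnn _ (hr y).le))
  -- uniform bound on E
  have hEb : ∀ f ∈ F, ∀ z ∈ E, dist (f x₀) (f z) ≤ Mb := by
    intro f hf z hz
    obtain ⟨y, hyt, hyz⟩ := mem_iUnion₂.mp (htcov hz)
    have hzball : z ∈ ball y (r y) :=
      mem_ball.mpr (lt_of_lt_of_le (mem_ball.mp hyz) (by linarith [hr y]))
    have h1 : dist (f y) (f z) ≤ L y * ω (dist y z) :=
      hball y f hf y (mem_ball_self (hr y)) z hzball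
    have h2 : ω (dist y z) ≤ ω (r y) := hωm.monotone (mem_ball'.mp hzball).le
    have h3 : dist (f x₀) (f z) ≤ M y + L y * ω (r y) :=
      calc dist (f x₀) (f z) ≤ dist (f x₀) (f y) + dist (f y) (f z) :=
            dist_triangle _ _ _
        _ ≤ M y + L y * ω (r y) :=
            add_le_add (hM y f hf)
              (h1.trans (mul_le_mul_of_nonneg_left h2 (hL y).le))
    exact h3.trans (Finset.single_le_sum
      (fun z _ => add_nonneg (hM0 z) (mul_nonneg (hL z).le (hωnn _ (hr z).le))) hyt)
  refine ⟨L₀ + 2 * Mb / ω ρ, by positivity, fun f hf x hx y hy => ?_⟩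
  rcases lt_or_ge (dist x y) ρ with hnear | hfar
  · -- near case
    obtain ⟨y₀, hy₀t, hxy₀⟩ := mem_iUnion₂.mp (htcov hx)
    have hρle : ρ ≤ r y₀ / 2 := Finset.inf'_le _ hy₀t
    have hxb : x ∈ ball y₀ (r y₀) :=
      mem_ball.mpr (lt_of_lt_of_le (mem_ball.mp hxy₀) (by linarith [hr y₀]))
    have hyb : y ∈ ball y₀ (r y₀) := by
      rw [mem_ball]
      calc dist y y₀ ≤ dist y x + dist x y₀ := dist_triangle _ _ _
        _ < ρ + r y₀ / 2 := by
            rw [dist_comm y x]; exact add_lt_add hnear (mem_ball.mp hxy₀)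
        _ ≤ r y₀ := by linarith
    have h1 : dist (f x) (f y) ≤ L y₀ * ω (dist x y) := hball y₀ f hf x hxb y hyb
    refine h1.trans (mul_le_mul_of_nonneg_right ?_ (hωnn _ dist_nonneg))
    have : 0 ≤ 2 * Mb / ω ρ := by positivity
    linarith [hL₀le y₀ hy₀t]
  · -- far case
    have hωle : ω ρ ≤ ω (dist x y) := hωm.monotone hfar
    have h1 : dist (f x) (f y) ≤ 2 * Mb := by
      calc dist (f x) (f y) ≤ dist (f x) (f x₀) + dist (f x₀) (f y) :=
            dist_triangle _ _ _
        _ ≤ Mb + Mb := add_le_add (by rw [dist_comm]; exact hEb f hf x hx)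
            (hEb f hf y hy)
        _ = 2 * Mb := by ring
    have h2 : 2 * Mb = (2 * Mb / ω ρ) * ω ρ := by
      field_simp
    have h3 : (2 * Mb / ω ρ) * ω ρ ≤ (2 * Mb / ω ρ) * ω (dist x y) :=
      mul_le_mul_of_nonneg_left hωle (by positivity)
    have h4 : 0 ≤ L₀ * ω (dist x y) :=
      mul_nonneg hL₀pos.le (hωnn _ dist_nonneg)
    calc dist (f x) (f y) ≤ 2 * Mb := h1
      _ = (2 * Mb / ω ρ) * ω ρ := h2
      _ ≤ (2 * Mb / ω ρ) * ω (dist x y) := h3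
      _ ≤ (L₀ + 2 * Mb / ω ρ) * ω (dist x y) := by nlinarith
end

section
/- Let X, Y, Z be metric spaces with Y ⊆ Z, and suppose d_Y satisfies an Escher condition relative to d_Z: for all R > 0 and ε > 0 there exists a compact set E ⊆ Y such that if x ∈ Y \ E and d_Y(x,y) < R then d_Z(x,y) ≤ ε·d_Y(x,y). Let F be a family of maps X → Y that is uniformly ω-continuous on compact sets (with respect to d_X and d_Y). If a sequence f_m ∈ F converges locally uniformly in the metric d_Z to a limit f : X → Z, and there exists x₀ ∈ X with f(x₀) ∈ ∂Y (the boundary of Y in Z), then f is constant. -/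
open Metric Set Filter Topology

/-- Escher condition forces constant limits on the boundary.
`Y` is an open subset of the metric space `Z`, carrying its own distance `dY`
(a metric on `Y`). If `dY` satisfies the Escher condition relative to the
distance of `Z`, `F` is a family of maps `X → Y` uniformly `ω`-continuous on
compact sets (w.r.t. `dY`), and a sequence `f m ∈ F` converges locally
uniformly (in `Z`) to a limit `f` with `f x₀ ∈ ∂Y`, then `f` is constant. -/
theorem stmt_3 {X Z : Type*} [MetricSpace X] [MetricSpace Z]
    (Y : Set Z) (hYopen : IsOpen Y)
    (dY : Z → Z → ℝ)
    (hd0 : ∀ x ∈ Y, dY x x = 0)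
    (hdpos : ∀ x ∈ Y, ∀ y ∈ Y, 0 ≤ dY x y)
    (hdsymm : ∀ x ∈ Y, ∀ y ∈ Y, dY x y = dY y x)
    (hdtri : ∀ x ∈ Y, ∀ y ∈ Y, ∀ z ∈ Y, dY x z ≤ dY x y + dY y z)
    (hEscher : ∀ R > (0 : ℝ), ∀ ε > (0 : ℝ), ∃ E : Set Z, E ⊆ Y ∧ IsCompact E ∧
      ∀ x ∈ Y \ E, ∀ y ∈ Y, dY x y < R → dist x y ≤ ε * dY x y)
    (ω : ℝ → ℝ) (hωc : Continuous ω) (hωm : StrictMono ω) (hω0 : ω 0 = 0)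
    (F : Set (X → Z)) (hmaps : ∀ g ∈ F, ∀ x, g x ∈ Y)
    (hunif : ∀ E : Set X, IsCompact E → ∃ L > (0 : ℝ),
      ∀ g ∈ F, ∀ x ∈ E, ∀ y ∈ E, dY (g x) (g y) ≤ L * ω (dist x y))
    (fm : ℕ → X → Z) (hfm : ∀ m, fm m ∈ F)
    (f : X → Z) (hconv : TendstoLocallyUniformly fm f atTop)
    (x₀ : X) (hbd : f x₀ ∈ frontier Y) :
    ∀ x y : X, f x = f y := by
  intro x y
  have hfx₀ : f x₀ ∉ Y := by
    rw [hYopen.frontier_eq] at hbd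
    exact hbd.2
  have hων : ∀ d : ℝ, 0 ≤ d → 0 ≤ ω d := fun d hd => hω0 ▸ hωm.monotone hd
  -- pointwise convergence
  have htend : ∀ z : X, Tendsto (fun m => fm m z) atTop (𝓝 (f z)) := fun z =>
    (tendstoLocallyUniformlyOn_univ.mpr hconv).tendsto_at (mem_univ z)
  -- uniform ω-continuity on the compact set {x₀, x, y}
  obtain ⟨L, hL, hLb⟩ := hunif {x₀, x, y} (Set.toFinite _).isCompact
  have hx₀m : x₀ ∈ ({x₀, x, y} : Set X) := by simp
  have hxm : x ∈ ({x₀, x, y} : Set X) := by simp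
  have hym : y ∈ ({x₀, x, y} : Set X) := by simp
  set R : ℝ := L * ω (dist x₀ x) + L * ω (dist x₀ y) + 1 with hRdef
  have hωx : 0 ≤ L * ω (dist x₀ x) := mul_nonneg hL.le (hων _ dist_nonneg)
  have hωy : 0 ≤ L * ω (dist x₀ y) := mul_nonneg hL.le (hων _ dist_nonneg)
  have hR : 0 < R := by positivity
  have key : ∀ ε > (0 : ℝ), dist (f x) (f y) ≤ ε * (2 * R) := by
    intro ε hε
    obtain ⟨E, hEY, hEc, hE⟩ := hEscher R hR ε hε
    have hfE : f x₀ ∈ Eᶜ := fun h => hfx₀ (hEY h)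
    have hev : ∀ᶠ m in atTop, fm m x₀ ∈ Eᶜ :=
      (htend x₀).eventually (hEc.isClosed.isOpen_compl.eventually_mem hfE)
    have hbound : ∀ᶠ m in atTop, dist (fm m x) (fm m y) ≤ ε * (2 * R) := by
      filter_upwards [hev] with m hm
      have hgY : ∀ z : X, fm m z ∈ Y := hmaps _ (hfm m)
      have hdiff : fm m x₀ ∈ Y \ E := ⟨hgY x₀, hm⟩
      have h1 : dY (fm m x₀) (fm m x) < R := by
        have := hLb (fm m) (hfm m) x₀ hx₀m x hxm
        simp only [hRdef]; linarith
      have h2 : dY (fm m x₀) (fm m y) < R := by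
        have := hLb (fm m) (hfm m) x₀ hx₀m y hym
        simp only [hRdef]; linarith
      have e1 : dist (fm m x₀) (fm m x) ≤ ε * R :=
        le_trans (hE _ hdiff _ (hgY x) h1)
          (by nlinarith [hdpos _ (hgY x₀) _ (hgY x)])
      have e2 : dist (fm m x₀) (fm m y) ≤ ε * R :=
        le_trans (hE _ hdiff _ (hgY y) h2)
          (by nlinarith [hdpos _ (hgY x₀) _ (hgY y)])
      calc dist (fm m x) (fm m y) ≤ dist (fm m x) (fm m x₀) + dist (fm m x₀) (fm m y) :=
            dist_triangle _ _ _
        _ ≤ ε * R + ε * R := by rw [dist_comm (fm m x)]; linarith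
        _ = ε * (2 * R) := by ring
    have hdt : Tendsto (fun m => dist (fm m x) (fm m y)) atTop (𝓝 (dist (f x) (f y))) :=
      (htend x).dist (htend y)
    exact le_of_tendsto hdt hbound
  have hd0' : dist (f x) (f y) ≤ 0 := by
    by_contra h
    push_neg at h
    have := key (dist (f x) (f y) / (4 * R)) (by positivity)
    have h2 : dist (f x) (f y) / (4 * R) * (2 * R) = dist (f x) (f y) / 2 := by
      field_simp; ring
    rw [h2] at this
    linarith
  exact eq_of_dist_eq_zero (le_antisymm hd0' dist_nonneg)
end

section
/- Let X be a metric space equipped with a transitive family G of isometries of X onto itself, let Y be a metric space, and let f : X → Y be continuous. If the family {f ∘ A : A ∈ G} is equicontinuous on X, then f is uniformly continuous on X. -/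
open Metric Set

/-- If `G` is a transitive family of (surjective) isometries of a
metric space `X` and the family `{f ∘ A : A ∈ G}` is equicontinuous on `X`,
then `f` is uniformly continuous. -/
theorem stmt_6 {X Y : Type*} [MetricSpace X] [MetricSpace Y]
    (G : Set (X → X))
    (hiso : ∀ A ∈ G, Isometry A ∧ Function.Surjective A)
    (htrans : ∀ x x' : X, ∃ A ∈ G, A x = x')
    (f : X → Y) (hf : Continuous f)
    (hequi : ∀ x₀ : X, ∀ ε > (0 : ℝ), ∃ δ > (0 : ℝ), ∀ A ∈ G, ∀ x : X,
      dist x x₀ < δ → dist (f (A x)) (f (A x₀)) < ε) :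
    UniformContinuous f := by
  rcases isEmpty_or_nonempty X with h | ⟨⟨x₀⟩⟩
  · exact Metric.uniformContinuous_iff.2 fun ε hε => ⟨1, one_pos, fun {a} => (h.false a).elim⟩
  rw [Metric.uniformContinuous_iff]
  intro ε hε
  obtain ⟨δ, hδ, hδ'⟩ := hequi x₀ ε hε
  refine ⟨δ, hδ, fun {x x'} hd => ?_⟩
  obtain ⟨A, hA, hAx⟩ := htrans x₀ x'
  obtain ⟨hAi, hAs⟩ := hiso A hA
  obtain ⟨z, hz⟩ := hAs x
  have : dist z x₀ < δ := by
    have := hAi.dist_eq z x₀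
    rw [hz, hAx] at this
    rw [← this]; exact hd
  have := hδ' A hA z this
  rwa [hz, hAx] at this
end

section
/- Let X be a length metric space (every pair of points joined by paths of length arbitrarily close to the distance) with a transitive family G of isometries, and let f : X → ℝⁿ be uniformly continuous. Then for every base point x₀ and every u ∈ X, the set {|f(A(u)) − f(A(x₀))| : A ∈ G} is bounded. In other words, uniform continuity of f implies every orbit of the family {x ↦ f(A(x)) − f(A(x₀)) : A ∈ G} is bounded in ℝⁿ. -/
open Metric Set

/-- On a length metric space `X` (expressed via chains of points
with small consecutive distances) with a transitive family `G` of isometries,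
uniform continuity of `f : X → ℝⁿ` implies that every orbit of the family
`{x ↦ f(A x) - f(A x₀) : A ∈ G}` is bounded. -/
theorem stmt_8 {X : Type*} [MetricSpace X] {n : ℕ}
    (hlength : ∀ δ > (0 : ℝ), ∀ x y : X, ∃ (m : ℕ) (z : ℕ → X),
      z 0 = x ∧ z m = y ∧ ∀ i < m, dist (z i) (z (i + 1)) < δ)
    (G : Set (X → X))
    (hiso : ∀ A ∈ G, Isometry A ∧ Function.Surjective A)
    (htrans : ∀ x x' : X, ∃ A ∈ G, A x = x')
    (f : X → EuclideanSpace ℝ (Fin n))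
    (huc : UniformContinuous f) :
    ∀ x₀ u : X, ∃ M : ℝ, ∀ A ∈ G, ‖f (A u) - f (A x₀)‖ ≤ M := by
  intro x₀ u
  obtain ⟨δ, hδ, hd⟩ := Metric.uniformContinuous_iff.mp huc 1 one_pos
  obtain ⟨m, z, hz0, hzm, hstep⟩ := hlength δ hδ x₀ u
  refine ⟨m, fun A hA => ?_⟩
  have hAiso := (hiso A hA).1
  have key : ∀ k ≤ m, dist (f (A (z 0))) (f (A (z k))) ≤ k := by
    intro k
    induction k with
    | zero => simp
    | succ k ih =>
      intro hk
      have h1 : dist (f (A (z k))) (f (A (z (k+1)))) ≤ 1 := by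
        apply le_of_lt
        apply hd
        rw [hAiso.dist_eq]
        exact hstep k (by omega)
      calc dist (f (A (z 0))) (f (A (z (k+1))))
          ≤ dist (f (A (z 0))) (f (A (z k))) + dist (f (A (z k))) (f (A (z (k+1)))) :=
            dist_triangle _ _ _
        _ ≤ k + 1 := add_le_add (ih (by omega)) h1
        _ = ((k+1 : ℕ) : ℝ) := by push_cast; ring
  have := key m le_rfl
  rw [hz0, hzm] at this
  rw [← dist_eq_norm]
  rwa [dist_comm] at this
end

section
/- Let X be a metric space, Y a metric space with a transitive family G of isometries on X, α ∈ (0,1], and f : X → ℝⁿ. Suppose there exist r ∈ (0,1) and L > 0 such that |f(A(x)) − f(A(y))| ≤ L·d_X(x,y)^α for all A ∈ G and all x, y with d_X(x,y) ≤ r. If in addition X is a length space, then there is C > 0 (one may take C = 2L·r^{α−1}) such that |f(x) − f(y)| ≤ C·max{d_X(x,y)^α, d_X(x,y)} for all x, y ∈ X; i.e., f is α-Hölder on small scales and Lipschitz on large scales. -/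
open Metric Set

/-- If `f : X → ℝⁿ` satisfies, via a transitive family of
isometries, the `α`-Hölder bound `|f(A x) - f(A y)| ≤ L d(x,y)^α` whenever
`d(x,y) ≤ r`, and `X` is a length space (expressed by the existence of chains
of at most `2 d(x,y)/r` points with consecutive distances at most `r`), then
with `C = 2 L r^(α-1)` one has
`|f x - f y| ≤ C max (d(x,y)^α) (d(x,y))` for all `x, y`. -/
theorem stmt_10 {X : Type*} [MetricSpace X] {n : ℕ}
    (G : Set (X → X))
    (hiso : ∀ A ∈ G, Isometry A ∧ Function.Surjective A)
    (htrans : ∀ x x' : X, ∃ A ∈ G, A x = x')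
    (f : X → EuclideanSpace ℝ (Fin n))
    (α : ℝ) (hα0 : 0 < α) (hα1 : α ≤ 1)
    (r L : ℝ) (hr0 : 0 < r) (hr1 : r < 1) (hL : 0 < L)
    (hlength : ∀ x y : X, r < dist x y → ∃ (m : ℕ) (z : ℕ → X),
      z 0 = x ∧ z m = y ∧ (∀ i < m, dist (z i) (z (i + 1)) ≤ r) ∧
      (m : ℝ) ≤ 2 * dist x y / r)
    (hholder : ∀ A ∈ G, ∀ x y : X, dist x y ≤ r →
      ‖f (A x) - f (A y)‖ ≤ L * dist x y ^ α) :
    ∃ C : ℝ, C = 2 * L * r ^ (α - 1) ∧ 0 < C ∧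
      ∀ x y : X, ‖f x - f y‖ ≤ C * max (dist x y ^ α) (dist x y) := by
  have hC : (0:ℝ) < 2 * L * r ^ (α - 1) := by
    have : (0:ℝ) < r ^ (α - 1) := Real.rpow_pos_of_pos hr0 _
    positivity
  refine ⟨2 * L * r ^ (α - 1), rfl, hC, ?_⟩
  -- direct Hölder bound for small distances
  have hd : ∀ x y : X, dist x y ≤ r → ‖f x - f y‖ ≤ L * dist x y ^ α := by
    intro x y hxy
    obtain ⟨A, hA, -⟩ := htrans x x
    obtain ⟨x', hx'⟩ := (hiso A hA).2 x
    obtain ⟨y', hy'⟩ := (hiso A hA).2 y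
    have hdist : dist x' y' = dist x y := by
      rw [← (hiso A hA).1.dist_eq, hx', hy']
    have := hholder A hA x' y' (by rw [hdist]; exact hxy)
    rwa [hx', hy', hdist] at this
  have hrpow1 : (1:ℝ) ≤ r ^ (α - 1) :=
    Real.one_le_rpow_of_pos_of_le_one_of_nonpos hr0 hr1.le (by linarith)
  intro x y
  rcases le_or_gt (dist x y) r with h | h
  · calc ‖f x - f y‖ ≤ L * dist x y ^ α := hd x y h
      _ ≤ (2 * L * r ^ (α - 1)) * (dist x y ^ α) := by
          have h1 : (0:ℝ) ≤ dist x y ^ α := Real.rpow_nonneg dist_nonneg _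
          nlinarith [mul_le_mul_of_nonneg_right hrpow1 h1, hL.le]
      _ ≤ (2 * L * r ^ (α - 1)) * max (dist x y ^ α) (dist x y) := by
          exact mul_le_mul_of_nonneg_left (le_max_left _ _) hC.le
  · obtain ⟨m, z, hz0, hzm, hstep, hm⟩ := hlength x y h
    have key : ∀ k ≤ m, ‖f (z 0) - f (z k)‖ ≤ k * (L * r ^ α) := by
      intro k hk
      induction k with
      | zero => simp
      | succ k ih =>
        have step : ‖f (z k) - f (z (k+1))‖ ≤ L * r ^ α := by
          have hs := hstep k (by omega)
          calc ‖f (z k) - f (z (k+1))‖ ≤ L * dist (z k) (z (k+1)) ^ α :=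
                hd _ _ hs
            _ ≤ L * r ^ α := by
                exact mul_le_mul_of_nonneg_left
                  (Real.rpow_le_rpow dist_nonneg hs hα0.le) hL.le
        calc ‖f (z 0) - f (z (k+1))‖
            ≤ ‖f (z 0) - f (z k)‖ + ‖f (z k) - f (z (k+1))‖ :=
              norm_sub_le_norm_sub_add_norm_sub _ _ _
          _ ≤ k * (L * r ^ α) + L * r ^ α := by
              have := ih (by omega); linarith
          _ = (k + 1 : ℕ) * (L * r ^ α) := by push_cast; ring
    have hmain := key m le_rfl
    rw [hz0, hzm] at hmain
    have hrs : r ^ (α - 1) * r = r ^ α := by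
      rw [← Real.rpow_add_one hr0.ne']; norm_num
    have hLr : (0:ℝ) ≤ L * r ^ α := by positivity
    calc ‖f x - f y‖ ≤ m * (L * r ^ α) := hmain
      _ ≤ (2 * dist x y / r) * (L * r ^ α) := mul_le_mul_of_nonneg_right hm hLr
      _ = (2 * L * r ^ (α - 1)) * dist x y := by
          rw [← hrs]; field_simp
      _ ≤ (2 * L * r ^ (α - 1)) * max (dist x y ^ α) (dist x y) :=
          mul_le_mul_of_nonneg_left (le_max_right _ _) hC.le
end

section
/- Let f : 𝔹ⁿ → ℝⁿ be a map such that C := sup over x ∈ 𝔹ⁿ of the Euclidean diameter of f(B_ρ(x, 1)) is finite, where B_ρ denotes a hyperbolic ball. Then the maximum modulus M(r, f) = sup_{|x| = r} |f(x)| satisfies M(r, f) ≤ |f(0)| + C·max{1, log((1+r)/(1−r))} for all r ∈ (0,1). In particular M(r,f) ≤ R_f · max{1, log((1+r)/(1−r))} where R_f = |f(0)| + C. -/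
/-!
Parametrize the diameter through `x` by `s ↦ tanh s • e`. Since `1 - tanh² = 1 / cosh²`, this curve
has constant hyperbolic speed `2`, so `ρ(tanh s • e, tanh t • e) ≤ 2 |t - s|`. Cutting `[0, artanh r]`
into `⌊artanh r⌋ + 1` pieces of length `< 1`, the endpoints of each piece lie in the hyperbolic unit
ball around its midpoint, so `f` moves by at most `C` along each piece; and
`⌊artanh r⌋ + 1 ≤ max 1 (2 artanh r) = max 1 ρ(0, x)`.
-/

open Metric Set

/-- The length of a path `γ : [0,1] → ℝⁿ` with respect to a conformal density `τ`. -/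
noncomputable def pathLength {n : ℕ} (τ : EuclideanSpace ℝ (Fin n) → ℝ)
    (γ : ℝ → EuclideanSpace ℝ (Fin n)) : ℝ :=
  ∫ t in (0:ℝ)..1, τ (γ t) * ‖deriv γ t‖

/-- The distance induced on a domain `Y ⊆ ℝⁿ` by a conformal density `τ`. -/
noncomputable def conformalDist {n : ℕ} (τ : EuclideanSpace ℝ (Fin n) → ℝ)
    (Y : Set (EuclideanSpace ℝ (Fin n))) (u v : EuclideanSpace ℝ (Fin n)) : ℝ :=
  sInf {l : ℝ | ∃ γ : ℝ → EuclideanSpace ℝ (Fin n), ContDiff ℝ 1 γ ∧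
    γ 0 = u ∧ γ 1 = v ∧ (∀ t ∈ Icc (0:ℝ) 1, γ t ∈ Y) ∧ l = pathLength τ γ}

/-- The hyperbolic distance on the unit ball `𝔹ⁿ`. -/
noncomputable def hypDist {n : ℕ} (u v : EuclideanSpace ℝ (Fin n)) : ℝ :=
  conformalDist (fun x => 2 / (1 - ‖x‖ ^ 2)) (ball (0 : EuclideanSpace ℝ (Fin n)) 1) u v

namespace Real

theorem one_sub_tanh_sq (x : ℝ) : 1 - tanh x ^ 2 = 1 / cosh x ^ 2 := by
  have := cosh_sq x
  have := (cosh_pos x).ne'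
  rw [tanh_eq_sinh_div_cosh]
  field_simp
  linarith

theorem tanh_eq_sinh_div_cosh_fun : tanh = sinh / cosh :=
  funext fun x => tanh_eq_sinh_div_cosh x

theorem hasDerivAt_tanh (x : ℝ) : HasDerivAt tanh (1 / cosh x ^ 2) x := by
  have h := (hasDerivAt_sinh x).div (hasDerivAt_cosh x) (cosh_pos x).ne'
  rw [← tanh_eq_sinh_div_cosh_fun] at h
  refine h.congr_deriv ?_
  congr 1
  linear_combination cosh_sq_sub_sinh_sq x

theorem contDiff_tanh {k : WithTop ℕ∞} : ContDiff ℝ k tanh := by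
  rw [tanh_eq_sinh_div_cosh_fun]
  exact contDiff_sinh.div contDiff_cosh fun x => (cosh_pos x).ne'

end Real

theorem Nat.floor_add_one_le_max_one_two_mul {a : ℝ} (ha : 0 ≤ a) :
    (⌊a⌋₊ + 1 : ℝ) ≤ max 1 (2 * a) := by
  rcases lt_or_ge a 1 with ha1 | ha1
  · simp [Nat.floor_eq_zero.2 ha1]
  · have := Nat.floor_le ha
    exact le_max_of_le_right (by linarith)

theorem dist_le_floor_add_one_mul {α : Type*} [PseudoMetricSpace α] (g : ℝ → α) {C : ℝ}
    (hg : ∀ s t, |t - s| < 1 → dist (g s) (g t) ≤ C) {a : ℝ} (ha : 0 ≤ a) :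
    dist (g 0) (g a) ≤ (⌊a⌋₊ + 1) * C := by
  set N : ℕ := ⌊a⌋₊ + 1
  have hN : (0 : ℝ) < N := by positivity
  have hstep : a / N < 1 := by
    rw [div_lt_one hN]
    exact_mod_cast Nat.lt_floor_add_one a
  have hgN : g a = g (N * (a / N)) := by rw [mul_div_cancel₀ _ hN.ne']
  calc dist (g 0) (g a) = dist (g ((0 : ℕ) * (a / N))) (g (N * (a / N))) := by simp [← hgN]
    _ ≤ ∑ k ∈ Finset.range N, dist (g (k * (a / N))) (g ((k + 1 : ℕ) * (a / N))) :=
      dist_le_range_sum_dist (fun k : ℕ => g (k * (a / N))) N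
    _ ≤ ∑ _k ∈ Finset.range N, C := by
      refine Finset.sum_le_sum fun k _ => hg _ _ ?_
      rw [abs_lt]; push_cast; constructor <;> nlinarith [div_nonneg ha hN.le]
    _ = (⌊a⌋₊ + 1) * C := by simp [N]

theorem conformalDist_le_pathLength {n : ℕ} {τ : EuclideanSpace ℝ (Fin n) → ℝ}
    {Y : Set (EuclideanSpace ℝ (Fin n))} (hτ : ∀ y ∈ Y, 0 ≤ τ y)
    {γ : ℝ → EuclideanSpace ℝ (Fin n)} (hγ : ContDiff ℝ 1 γ) (hγY : ∀ t ∈ Icc (0 : ℝ) 1, γ t ∈ Y) :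
    conformalDist τ Y (γ 0) (γ 1) ≤ pathLength τ γ := by
  refine csInf_le ⟨0, ?_⟩ ⟨γ, hγ, rfl, rfl, hγY, rfl⟩
  rintro l ⟨σ, -, -, -, hσY, rfl⟩
  exact intervalIntegral.integral_nonneg zero_le_one fun t ht =>
    mul_nonneg (hτ _ (hσY t ht)) (norm_nonneg _)

theorem tanh_smul_mem_ball {n : ℕ} {e : EuclideanSpace ℝ (Fin n)} (he : ‖e‖ = 1) (s : ℝ) :
    Real.tanh s • e ∈ ball (0 : EuclideanSpace ℝ (Fin n)) 1 := by
  simpa [norm_smul, he] using Real.abs_tanh_lt_one s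

theorem hypDist_tanh_smul_le {n : ℕ} {e : EuclideanSpace ℝ (Fin n)} (he : ‖e‖ = 1) (s t : ℝ) :
    hypDist (Real.tanh s • e) (Real.tanh t • e) ≤ 2 * |t - s| := by
  set γ : ℝ → EuclideanSpace ℝ (Fin n) := fun u => Real.tanh (s + u * (t - s)) • e
  have hderiv : ∀ u, deriv γ u = ((t - s) / Real.cosh (s + u * (t - s)) ^ 2) • e := fun u => by
    have h := ((Real.hasDerivAt_tanh _).comp u
      (((hasDerivAt_id' u).mul_const (t - s)).const_add s)).smul_const e
    exact h.deriv.trans (by congr 1; ring)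
  have hspeed : ∀ u, 2 / (1 - ‖γ u‖ ^ 2) * ‖deriv γ u‖ = 2 * |t - s| := fun u => by
    have := (Real.cosh_pos (s + u * (t - s))).ne'
    rw [hderiv, norm_smul, norm_smul, he, Real.norm_eq_abs, Real.norm_eq_abs, mul_one, sq_abs,
      Real.one_sub_tanh_sq, abs_div, abs_of_pos (pow_pos (Real.cosh_pos _) 2)]
    field_simp
  have hγ : ContDiff ℝ 1 γ :=
    (Real.contDiff_tanh.comp (contDiff_const.add (contDiff_id.mul contDiff_const))).smul
      contDiff_const
  have hdens : ∀ y ∈ ball (0 : EuclideanSpace ℝ (Fin n)) 1, 0 ≤ 2 / (1 - ‖y‖ ^ 2) := fun y hy => by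
    rw [mem_ball_zero_iff] at hy
    have : ‖y‖ ^ 2 < 1 := by nlinarith [norm_nonneg y]
    exact div_nonneg zero_le_two (by linarith)
  have := conformalDist_le_pathLength hdens hγ fun u _ => tanh_smul_mem_ball he _
  simpa [γ, hypDist, pathLength, hspeed] using this

theorem norm_sub_le_of_abs_sub_lt_one {n : ℕ}
    {f : EuclideanSpace ℝ (Fin n) → EuclideanSpace ℝ (Fin n)} {C : ℝ}
    (hdiam : ∀ x ∈ ball (0 : EuclideanSpace ℝ (Fin n)) 1,
      ∀ u ∈ ball (0 : EuclideanSpace ℝ (Fin n)) 1,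
      ∀ v ∈ ball (0 : EuclideanSpace ℝ (Fin n)) 1,
        hypDist x u < 1 → hypDist x v < 1 → ‖f u - f v‖ ≤ C)
    {e : EuclideanSpace ℝ (Fin n)} (he : ‖e‖ = 1) {s t : ℝ} (hst : |t - s| < 1) :
    ‖f (Real.tanh s • e) - f (Real.tanh t • e)‖ ≤ C := by
  have hmid : ∀ u ∈ ({s, t} : Set ℝ),
      hypDist (Real.tanh ((s + t) / 2) • e) (Real.tanh u • e) < 1 := by
    rw [abs_sub_lt_iff] at hst
    rintro u (rfl | rfl) <;>
    · refine (hypDist_tanh_smul_le he _ _).trans_lt ?_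
      rw [← lt_div_iff₀' two_pos, abs_sub_lt_iff]
      constructor <;> linarith
  exact hdiam _ (tanh_smul_mem_ball he _) _ (tanh_smul_mem_ball he _) _ (tanh_smul_mem_ball he _)
    (hmid s (by simp)) (hmid t (by simp))

/-- If the image under `f : 𝔹ⁿ → ℝⁿ` of every hyperbolic ball of
radius `1` has Euclidean diameter at most `C`, then
`M(r,f) ≤ |f 0| + C max {1, log((1+r)/(1-r))}`, and hence
`M(r,f) ≤ R_f·max {1, log((1+r)/(1-r))}` with `R_f = |f 0| + C`. -/
theorem stmt_12 {n : ℕ}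
    (f : EuclideanSpace ℝ (Fin n) → EuclideanSpace ℝ (Fin n))
    (C : ℝ) (hC : 0 ≤ C)
    (hdiam : ∀ x ∈ ball (0 : EuclideanSpace ℝ (Fin n)) 1,
      ∀ u ∈ ball (0 : EuclideanSpace ℝ (Fin n)) 1,
      ∀ v ∈ ball (0 : EuclideanSpace ℝ (Fin n)) 1,
        hypDist x u < 1 → hypDist x v < 1 → ‖f u - f v‖ ≤ C) :
    ∀ r : ℝ, 0 < r → r < 1 → ∀ x : EuclideanSpace ℝ (Fin n), ‖x‖ = r →
      ‖f x‖ ≤ ‖f 0‖ + C * max 1 (Real.log ((1 + r) / (1 - r))) ∧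
      ‖f x‖ ≤ (‖f 0‖ + C) * max 1 (Real.log ((1 + r) / (1 - r))) := by
  intro r hr0 hr1 x hx
  have hr : r ∈ Ioo (-1 : ℝ) 1 := ⟨by linarith, hr1⟩
  have he : ‖r⁻¹ • x‖ = 1 := by
    rw [norm_smul, hx, norm_inv, Real.norm_of_nonneg hr0.le, inv_mul_cancel₀ hr0.ne']
  have hchain := dist_le_floor_add_one_mul (fun s => f (Real.tanh s • r⁻¹ • x))
    (fun s t hst => (dist_eq_norm _ _).trans_le (norm_sub_le_of_abs_sub_lt_one hdiam he hst))
    (Real.artanh_nonneg hr0.le)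
  rw [Real.tanh_artanh hr, Real.tanh_zero, zero_smul, smul_smul, mul_inv_cancel₀ hr0.ne',
    one_smul, dist_comm, dist_eq_norm] at hchain
  have hlog : 2 * Real.artanh r = Real.log ((1 + r) / (1 - r)) := by
    rw [Real.artanh_eq_half_log (Ioo_subset_Icc_self hr)]; ring
  have hN := Nat.floor_add_one_le_max_one_two_mul (Real.artanh_nonneg hr0.le)
  rw [hlog] at hN
  have hbound : ‖f x‖ ≤ ‖f 0‖ + C * max 1 (Real.log ((1 + r) / (1 - r))) :=
    calc ‖f x‖ ≤ ‖f 0‖ + ‖f x - f 0‖ := norm_le_norm_add_norm_sub' _ _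
      _ ≤ ‖f 0‖ + C * (⌊Real.artanh r⌋₊ + 1) := by rw [mul_comm]; gcongr
      _ ≤ ‖f 0‖ + C * max 1 (Real.log ((1 + r) / (1 - r))) := by gcongr
  refine ⟨hbound, hbound.trans ?_⟩
  nlinarith [norm_nonneg (f 0), le_max_left 1 (Real.log ((1 + r) / (1 - r)))]
end
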